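/- Let ν be a doubling measure on ℝⁿ with doubling constant C. With β := C³/(1+C³) ∈ (0,1), for every x ∈ ℝⁿ, r > 0, and integer k ≥ 1, the thin annulus satisfies ν(B(x,r) \ B(x,(1−2⁻ᵏ)r)) ≤ β^{k−1} ν(B(x,r)). -/

import Mathlib

/-!
Place a maximal `2ρ`-separated set `N` on the sphere of radius `s`. The balls of radius `ρ` around
`N` are disjoint and lie in the shell `s - ρ ≤ |z - x| < s + ρ`, while the balls of radius `8ρ`
around `N` cover the outer shell `s + ρ ≤ |z - x| < s + 3ρ`. Three doublings then bound the outer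
shell by `C³` times the inner one, so the outer shell carries at most the fraction `C³/(1+C³)` of
their union. Taking `s + 3ρ = r`, `s + ρ = (1 - 2⁻ᵏ⁻¹)r` and `s - ρ = (1 - 2⁻ᵏ)r`, each halving of
the width of the annulus costs a factor `C³/(1+C³)`, starting from the whole ball at `k = 0`.
-/

open MeasureTheory Metric Set
open scoped ENNReal

namespace Metric

variable {X : Type*}

lemma exists_maximal_isSeparated [PseudoEMetricSpace X] (ε : ℝ≥0∞) (s : Set X) :
    ∃ N, Maximal (fun N ↦ N ⊆ s ∧ IsSeparated ε N) N :=
  zorn_subset _ fun c hcs hc ↦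
    ⟨⋃₀ c, ⟨sUnion_subset fun _ ht ↦ (hcs ht).1, hc.pairwise_sUnion.2 fun _ ht ↦ (hcs ht).2⟩,
      fun _ ↦ subset_sUnion_of_mem⟩

lemma exists_separated_cover [PseudoMetricSpace X] (s : Set X) {δ : ℝ} (hδ : 0 ≤ δ) :
    ∃ N ⊆ s, N.Pairwise (fun a b ↦ δ < dist a b) ∧ s ⊆ ⋃ y ∈ N, closedBall y δ := by
  obtain ⟨N, hN⟩ := exists_maximal_isSeparated (ENNReal.ofReal δ) s
  refine ⟨N, hN.prop.1, hN.prop.2.mono' fun a b h ↦ ?_, ?_⟩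
  · rwa [edist_dist, ENNReal.ofReal_lt_ofReal_iff_of_nonneg hδ] at h
  · have := (IsCover.of_maximal_isSeparated (ε := δ.toNNReal) hN).subset_iUnion_closedBall
    rwa [Real.coe_toNNReal _ hδ] at this

lemma ball_subset_ball_diff_ball_of_mem_sphere [PseudoMetricSpace X] {x m : X} {s ρ : ℝ}
    (hm : m ∈ sphere x s) : ball m ρ ⊆ ball x (s + ρ) \ ball x (s - ρ) := by
  intro w hw
  rw [mem_ball] at hw
  rw [mem_sphere] at hm
  refine ⟨mem_ball.2 ?_, fun hw' ↦ ?_⟩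
  · linarith [dist_triangle w m x]
  · linarith [mem_ball.1 hw', dist_triangle m w x, dist_comm m w]

lemma exists_mem_sphere_dist_eq_sub {E : Type*} [NormedAddCommGroup E] [NormedSpace ℝ E]
    {x z : E} {s : ℝ} (hs : 0 ≤ s) (hsz : s ≤ dist z x) :
    ∃ y ∈ sphere x s, dist z y = dist z x - s := by
  rcases hs.eq_or_lt with rfl | hs
  · exact ⟨x, by simp, by rw [sub_zero]⟩
  have hd : dist x z ≠ 0 := by rw [dist_comm]; linarith
  refine ⟨AffineMap.lineMap x z (s / dist x z), ?_, ?_⟩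
  · rw [mem_sphere, dist_lineMap_left, Real.norm_of_nonneg (by positivity),
      div_mul_cancel₀ _ hd]
  · rw [dist_comm, dist_lineMap_right, Real.norm_of_nonneg, sub_mul, one_mul,
      div_mul_cancel₀ _ hd, dist_comm]
    rw [sub_nonneg, div_le_one (by positivity), dist_comm]
    exact hsz

end Metric

lemma ENNReal.le_div_one_add_mul_add {a u v : ℝ≥0∞} (ha : a ≠ ∞) (h : u ≤ a * v) :
    u ≤ a / (1 + a) * (u + v) := by
  rw [← ENNReal.mul_div_right_comm, ENNReal.le_div_iff_mul_le (by simp) (by simp [ha])]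
  calc u * (1 + a) = u + a * u := by ring
    _ ≤ a * v + a * u := by gcongr
    _ = a * (u + v) := by ring

namespace MeasureTheory.Measure

variable {X : Type*} [PseudoMetricSpace X] [MeasurableSpace X]

def IsDoublingWith (μ : Measure X) (D : ℝ≥0∞) : Prop :=
  ∀ (x : X) (r : ℝ), 0 < r → μ (ball x (2 * r)) ≤ D * μ (ball x r)

lemma IsDoublingWith.measure_ball_two_pow_mul_le {μ : Measure X} {D : ℝ≥0∞}
    (hμ : μ.IsDoublingWith D) (x : X) {r : ℝ} (hr : 0 < r) (j : ℕ) :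
    μ (ball x (2 ^ j * r)) ≤ D ^ j * μ (ball x r) := by
  induction j with
  | zero => simp
  | succ j ih =>
    calc μ (ball x (2 ^ (j + 1) * r)) = μ (ball x (2 * (2 ^ j * r))) := by ring_nf
      _ ≤ D * μ (ball x (2 ^ j * r)) := hμ x _ (by positivity)
      _ ≤ D * (D ^ j * μ (ball x r)) := by gcongr
      _ = D ^ (j + 1) * μ (ball x r) := by rw [pow_succ', mul_assoc]

variable {E : Type*} [NormedAddCommGroup E] [NormedSpace ℝ E] [TopologicalSpace.SeparableSpace E]
  [MeasurableSpace E] [OpensMeasurableSpace E] {μ : Measure E} {D : ℝ≥0∞}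

theorem IsDoublingWith.measure_ball_diff_ball_le_pow_three_mul (hμ : μ.IsDoublingWith D)
    (x : E) {s ρ : ℝ} (hs : 0 ≤ s) (hρ : 0 < ρ) :
    μ (ball x (s + 3 * ρ) \ ball x (s + ρ)) ≤ D ^ 3 * μ (ball x (s + ρ) \ ball x (s - ρ)) := by
  obtain ⟨N, hNs, hNsep, hNcover⟩ := exists_separated_cover (sphere x s) (by positivity : 0 ≤ 2 * ρ)
  have hdisj : N.PairwiseDisjoint (ball · ρ) := fun a ha b hb hab ↦
    ball_disjoint_ball (by linarith [hNsep ha hb hab])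
  have hN : N.Countable :=
    hdisj.countable_of_isOpen (fun _ _ ↦ isOpen_ball) fun _ _ ↦ nonempty_ball.2 hρ
  have hcover : ball x (s + 3 * ρ) \ ball x (s + ρ) ⊆ ⋃ m ∈ N, ball m (2 ^ 3 * ρ) := by
    rintro z ⟨hz, hz'⟩
    rw [mem_ball] at hz hz'
    obtain ⟨y, hy, hzy⟩ := exists_mem_sphere_dist_eq_sub hs (by linarith)
    obtain ⟨m, hm, hym⟩ := mem_iUnion₂.1 (hNcover hy)
    refine mem_biUnion hm (mem_ball.2 ?_)
    linarith [dist_triangle z y m, mem_closedBall.1 hym]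
  calc μ (ball x (s + 3 * ρ) \ ball x (s + ρ))
      ≤ μ (⋃ m ∈ N, ball m (2 ^ 3 * ρ)) := measure_mono hcover
    _ ≤ ∑' m : N, μ (ball (m : E) (2 ^ 3 * ρ)) := measure_biUnion_le μ hN _
    _ ≤ ∑' m : N, D ^ 3 * μ (ball (m : E) ρ) :=
        ENNReal.tsum_le_tsum fun m ↦ hμ.measure_ball_two_pow_mul_le m hρ 3
    _ = D ^ 3 * μ (⋃ m ∈ N, ball m ρ) := by
        rw [ENNReal.tsum_mul_left, measure_biUnion hN hdisj fun _ _ ↦ measurableSet_ball]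
    _ ≤ D ^ 3 * μ (ball x (s + ρ) \ ball x (s - ρ)) := by
        gcongr
        exact iUnion₂_subset fun _ hm ↦ ball_subset_ball_diff_ball_of_mem_sphere (hNs hm)

theorem IsDoublingWith.measure_ball_diff_ball_le_div_one_add_mul (hμ : μ.IsDoublingWith D)
    (hD : D ≠ ∞) (x : E) {s ρ : ℝ} (hs : 0 ≤ s) (hρ : 0 < ρ) :
    μ (ball x (s + 3 * ρ) \ ball x (s + ρ)) ≤
      D ^ 3 / (1 + D ^ 3) * μ (ball x (s + 3 * ρ) \ ball x (s - ρ)) := by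
  have hsplit : ball x (s + 3 * ρ) \ ball x (s - ρ) =
      (ball x (s + 3 * ρ) \ ball x (s + ρ)) ∪ (ball x (s + ρ) \ ball x (s - ρ)) :=
    (sdiff_union_sdiff_cancel (ball_subset_ball (by linarith)) (ball_subset_ball (by linarith))).symm
  rw [hsplit, measure_union (disjoint_sdiff_left.mono_right sdiff_subset)
      (measurableSet_ball.diff measurableSet_ball)]
  exact ENNReal.le_div_one_add_mul_add (by simp [hD])
    (hμ.measure_ball_diff_ball_le_pow_three_mul x hs hρ)

theorem IsDoublingWith.measure_ball_diff_ball_one_sub_inv_two_pow_le (hμ : μ.IsDoublingWith D)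
    (hD : D ≠ ∞) (x : E) {r : ℝ} (hr : 0 < r) (k : ℕ) :
    μ (ball x r \ ball x ((1 - 2⁻¹ ^ k) * r)) ≤ (D ^ 3 / (1 + D ^ 3)) ^ k * μ (ball x r) := by
  induction k with
  | zero => simp
  | succ k ih =>
    have hc : (2⁻¹ : ℝ) ^ k ≤ 1 := pow_le_one₀ (by norm_num) (by norm_num)
    have step := hμ.measure_ball_diff_ball_le_div_one_add_mul hD x
      (s := (1 - 3 / 4 * 2⁻¹ ^ k) * r) (ρ := 2⁻¹ ^ k / 4 * r) (by nlinarith) (by positivity)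
    rw [show (1 - 3 / 4 * 2⁻¹ ^ k) * r + 3 * (2⁻¹ ^ k / 4 * r) = r by ring,
      show (1 - 3 / 4 * 2⁻¹ ^ k) * r + 2⁻¹ ^ k / 4 * r = (1 - 2⁻¹ ^ (k + 1)) * r by ring,
      show (1 - 3 / 4 * 2⁻¹ ^ k) * r - 2⁻¹ ^ k / 4 * r = (1 - 2⁻¹ ^ k) * r by ring] at step
    calc μ (ball x r \ ball x ((1 - 2⁻¹ ^ (k + 1)) * r))
        ≤ D ^ 3 / (1 + D ^ 3) * μ (ball x r \ ball x ((1 - 2⁻¹ ^ k) * r)) := step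
      _ ≤ D ^ 3 / (1 + D ^ 3) * ((D ^ 3 / (1 + D ^ 3)) ^ k * μ (ball x r)) := by gcongr
      _ = (D ^ 3 / (1 + D ^ 3)) ^ (k + 1) * μ (ball x r) := by rw [← mul_assoc, ← pow_succ']

end MeasureTheory.Measure

theorem annulus_geometric_decay (n : ℕ) (C : ℝ) (hC : 1 ≤ C)
    (ν : Measure (EuclideanSpace ℝ (Fin n)))
    (hdoub : ∀ (x : EuclideanSpace ℝ (Fin n)) (r : ℝ), 0 < r →
      ν (Metric.ball x (2*r)) ≤ ENNReal.ofReal C * ν (Metric.ball x r)) :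
    (0 < C^3/(1+C^3) ∧ C^3/(1+C^3) < 1) ∧
    ∀ (x : EuclideanSpace ℝ (Fin n)) (r : ℝ) (k : ℕ), 0 < r → 1 ≤ k →
      ν (Metric.ball x r \ Metric.ball x ((1 - (2:ℝ)⁻¹^k) * r))
        ≤ ENNReal.ofReal ((C^3/(1+C^3))^(k-1)) * ν (Metric.ball x r) := by
  have hC3 : 0 < C ^ 3 := by positivity
  have hβ1 : C ^ 3 / (1 + C ^ 3) < 1 := (div_lt_one (by positivity)).2 (by linarith)
  have hβ : ENNReal.ofReal C ^ 3 / (1 + ENNReal.ofReal C ^ 3) =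
      ENNReal.ofReal (C ^ 3 / (1 + C ^ 3)) := by
    rw [ENNReal.ofReal_div_of_pos (by positivity), ENNReal.ofReal_add zero_le_one hC3.le,
      ENNReal.ofReal_one, ENNReal.ofReal_pow (by positivity)]
  refine ⟨⟨by positivity, hβ1⟩, fun x r k hr _ ↦ ?_⟩
  calc ν (ball x r \ ball x ((1 - 2⁻¹ ^ k) * r))
      ≤ ENNReal.ofReal (C ^ 3 / (1 + C ^ 3)) ^ k * ν (ball x r) :=
        hβ ▸ Measure.IsDoublingWith.measure_ball_diff_ball_one_sub_inv_two_pow_le hdoub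
          ENNReal.ofReal_ne_top x hr k
    _ ≤ ENNReal.ofReal (C ^ 3 / (1 + C ^ 3)) ^ (k - 1) * ν (ball x r) := by
        gcongr ?_ * _
        exact pow_le_pow_right_of_le_one' (ENNReal.ofReal_le_one.2 hβ1.le) (Nat.sub_le k 1)
    _ = ENNReal.ofReal ((C ^ 3 / (1 + C ^ 3)) ^ (k - 1)) * ν (ball x r) := by
        rw [ENNReal.ofReal_pow (by positivity)]
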